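/- arXiv:2604.01939 — 8 statements merged into one kernel-verified Lean document; each statement's English description precedes it below -/
import Mathlib

section
/- Let π be a normalized possibility distribution on Y = {1,…,n}, i.e. π ∈ (0,1]^n with max_k π_k = 1, let σ be a permutation of {1,…,n} sorting π nonincreasingly, set π̃_r := π_{σ(r)} (so π̃_1 = 1 ≥ π̃_2 ≥ … ≥ π̃_n > 0, with the convention π̃_{n+1} := 0), and set A_r := {σ(1),…,σ(r)}. Then for any probability vector p ∈ Δ_n with induced probability measure P(A) = Σ_{k∈A} p_k, the following are equivalent: (i) Σ_{k∈A_r} p_k ≥ 1 − π̃_{r+1} for every r = 1,…,n−1; (ii) N(A) ≤ P(A) ≤ Π(A) for every subset A ⊆ Y, where Π(A) = max_{k∈A} π_k (with Π(∅)=0) and N(A) = 1 − Π(Y∖A). -/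
open Finset

/-- For a normalized possibility distribution `π` on `Y = {1,…,n}`
(sorted nonincreasingly by the permutation `σ`) and a probability vector `p ∈ Δ_n`,
the nested subset constraints `∑_{k ∈ A_r} p_k ≥ 1 - π̃_{r+1}` (r = 1,…,n-1)
hold iff `N(A) ≤ P(A) ≤ Π(A)` for every `A ⊆ Y`. Indices are 0-based: the sorted
position `r : Fin n` with `1 ≤ r` corresponds to the paper's constraint index `r`,
`A_r = {σ(i) : i < r}` and `π̃_{r+1} = π(σ(r))`. -/
theorem stmt_0 (n : ℕ) (hn : 0 < n) (π : Fin n → ℝ)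
    (hπpos : ∀ k, 0 < π k) (hπle : ∀ k, π k ≤ 1) (hπnorm : ∃ k, π k = 1)
    (σ : Equiv.Perm (Fin n))
    (hσ : ∀ r s : Fin n, r ≤ s → π (σ s) ≤ π (σ r))
    (p : Fin n → ℝ) (hp0 : ∀ k, 0 ≤ p k) (hp1 : ∑ k, p k = 1)
    (Pos Nec : Finset (Fin n) → ℝ)
    (hPos : ∀ (A : Finset (Fin n)) (hA : A.Nonempty), Pos A = A.sup' hA π)
    (hPosEmpty : Pos ∅ = 0)
    (hNec : ∀ A : Finset (Fin n), Nec A = 1 - Pos Aᶜ) :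
    (∀ r : Fin n, 1 ≤ (r : ℕ) →
        1 - π (σ r) ≤ ∑ i ∈ univ.filter (fun i : Fin n => (i : ℕ) < (r : ℕ)), p (σ i))
      ↔
    (∀ A : Finset (Fin n), Nec A ≤ ∑ k ∈ A, p k ∧ ∑ k ∈ A, p k ≤ Pos A) := by
  -- reindexing lemma
  have hre : ∀ r : Fin n,
      ∑ k ∈ (univ.filter (fun i : Fin n => (i : ℕ) < (r : ℕ))).image σ, p k
        = ∑ i ∈ univ.filter (fun i : Fin n => (i : ℕ) < (r : ℕ)), p (σ i) := by
    intro r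
    exact Finset.sum_image (fun x _ y _ h => σ.injective h)
  have hsum_compl : ∀ A : Finset (Fin n), ∑ k ∈ Aᶜ, p k = 1 - ∑ k ∈ A, p k := by
    intro A
    have := Finset.sum_add_sum_compl A p
    rw [hp1] at this
    linarith
  constructor
  · intro h
    -- key : Nec A ≤ P A for all A
    have key : ∀ A : Finset (Fin n), Nec A ≤ ∑ k ∈ A, p k := by
      intro A
      rcases eq_or_ne Aᶜ ∅ with hAc | hAc
      · have hA : A = univ := by
          rw [← compl_compl A, hAc, Finset.compl_empty]
        rw [hNec, hAc, hPosEmpty, hA, hp1]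
        norm_num
      · have hAc' : Aᶜ.Nonempty := Finset.nonempty_of_ne_empty hAc
        set S := Aᶜ.image σ.symm with hS
        have hS' : S.Nonempty := hAc'.image _
        set r := S.min' hS' with hr
        have hrS : r ∈ S := S.min'_mem hS'
        obtain ⟨k, hk, hkr⟩ := Finset.mem_image.mp hrS
        have hσr : σ r ∈ Aᶜ := by
          rw [← hkr]; simpa using hk
        have hπσr : π (σ r) ≤ Pos Aᶜ := by
          rw [hPos Aᶜ hAc']
          exact Finset.le_sup' π hσr
        rcases Nat.eq_zero_or_pos (r : ℕ) with h0 | h1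
        · -- π (σ r) = 1 since r is the top index
          have hmax : ∀ s : Fin n, π (σ s) ≤ π (σ r) := by
            intro s
            exact hσ r s (by omega)
          obtain ⟨k0, hk0⟩ := hπnorm
          have : (1 : ℝ) ≤ π (σ r) := by
            have := hmax (σ.symm k0)
            rwa [Equiv.apply_symm_apply, hk0] at this
          have hPA : 0 ≤ ∑ k ∈ A, p k := Finset.sum_nonneg fun k _ => hp0 k
          rw [hNec]
          linarith
        · have hineq := h r h1
          -- A_r ⊆ A
          have hsub : (univ.filter (fun i : Fin n => (i : ℕ) < (r : ℕ))).image σ ⊆ A := by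
            intro x hx
            obtain ⟨i, hi, hix⟩ := Finset.mem_image.mp hx
            have hilt : (i : ℕ) < (r : ℕ) := (Finset.mem_filter.mp hi).2
            by_contra hxA
            have hxc : x ∈ Aᶜ := Finset.mem_compl.mpr hxA
            have : σ.symm x ∈ S := Finset.mem_image_of_mem _ hxc
            have hle := S.min'_le _ this
            have hi' : σ.symm x = i := by rw [← hix, Equiv.symm_apply_apply]
            have hc : ((σ.symm x : Fin n) : ℕ) = (i : ℕ) := congrArg Fin.val hi'
            have hle' : (r : ℕ) ≤ ((σ.symm x : Fin n) : ℕ) := Fin.le_def.mp hle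
            omega
          have hmono : ∑ k ∈ (univ.filter (fun i : Fin n => (i : ℕ) < (r : ℕ))).image σ, p k
              ≤ ∑ k ∈ A, p k :=
            Finset.sum_le_sum_of_subset_of_nonneg hsub (fun k _ _ => hp0 k)
          rw [hNec]
          rw [hre] at hmono
          linarith
    intro A
    refine ⟨key A, ?_⟩
    have := key Aᶜ
    rw [hNec, compl_compl, hsum_compl] at this
    linarith
  · intro h r hr
    set A := (univ.filter (fun i : Fin n => (i : ℕ) < (r : ℕ))).image σ with hA
    have hσrA : σ r ∈ Aᶜ := by
      rw [Finset.mem_compl]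
      intro hmem
      obtain ⟨i, hi, hix⟩ := Finset.mem_image.mp hmem
      have : i = r := σ.injective hix
      have := (Finset.mem_filter.mp hi).2
      omega
    have hAc : Aᶜ.Nonempty := ⟨σ r, hσrA⟩
    have hPosAc : Pos Aᶜ ≤ π (σ r) := by
      rw [hPos Aᶜ hAc]
      apply Finset.sup'_le
      intro k hk
      have hkA : k ∉ A := Finset.mem_compl.mp hk
      have hge : (r : ℕ) ≤ ((σ.symm k : Fin n) : ℕ) := by
        by_contra hlt
        push_neg at hlt
        apply hkA
        apply Finset.mem_image.mpr
        exact ⟨σ.symm k, Finset.mem_filter.mpr ⟨Finset.mem_univ _, hlt⟩,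
          Equiv.apply_symm_apply _ _⟩
      have := hσ r (σ.symm k) hge
      rwa [Equiv.apply_symm_apply] at this
    have := (h A).1
    rw [hNec] at this
    rw [← hre]
    linarith
end

section
/- Let π ∈ [0,1]^n satisfy 1 = π_1 ≥ π_2 ≥ … ≥ π_n ≥ 0, with the convention π_{n+1} := 0, and define p_i := Σ_{j=i}^n (π_j − π_{j+1})/j for i = 1,…,n. Then: (a) p ∈ Δ_n, i.e. all p_i ≥ 0 and Σ_{i=1}^n p_i = 1; (b) p_1 ≥ p_2 ≥ … ≥ p_n; (c) the antipignistic transform of p recovers π, i.e. i·p_i + Σ_{j=i+1}^n p_j = π_i for every i = 1,…,n. -/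
/-!
With `d j = (π j - π (j + 1)) / (j + 1)` we have `p i = ∑_{j ≥ i} d j`, so `p` is a tail sum of
nonnegative terms: it is nonnegative and nonincreasing. Exchanging the order of summation,
`i • p i + ∑_{j ≥ i} p j = ∑_{k ≥ i} (k + 1) • d k = ∑_{k ≥ i} (π k - π (k + 1))`, which telescopes
to `π i - π n = π i`; at `i = 0` this says that `p` sums to `π 0 = 1`.
-/

open Finset

variable {𝕜 : Type*} [Field 𝕜]

/-- The reverse antipignistic transform, indexed from `0`: `π n` plays the role of `π_{n+1} = 0`. -/
def antipignisticReverse (n : ℕ) (π : ℕ → 𝕜) (i : ℕ) : 𝕜 :=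
  ∑ j ∈ Ico i n, (π j - π (j + 1)) / ((j : 𝕜) + 1)

def antipignistic (n : ℕ) (p : ℕ → 𝕜) (i : ℕ) : 𝕜 :=
  ((i : 𝕜) + 1) * p i + ∑ j ∈ Ico (i + 1) n, p j

theorem antipignisticReverse_eq_add {n i : ℕ} (π : ℕ → 𝕜) (hi : i < n) :
    antipignisticReverse n π i =
      (π i - π (i + 1)) / ((i : 𝕜) + 1) + antipignisticReverse n π (i + 1) :=
  sum_eq_sum_Ico_succ_bot hi _

section Order

variable [LinearOrder 𝕜] [IsStrictOrderedRing 𝕜]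

theorem antipignisticReverse_nonneg {n : ℕ} {π : ℕ → 𝕜}
    (hπ : ∀ j, j < n → π (j + 1) ≤ π j) (i : ℕ) : 0 ≤ antipignisticReverse n π i :=
  sum_nonneg fun j hj ↦ div_nonneg (sub_nonneg.2 (hπ j (mem_Ico.1 hj).2)) (by positivity)

theorem antipignisticReverse_succ_le {n i : ℕ} {π : ℕ → 𝕜}
    (hπ : π (i + 1) ≤ π i) (hi : i < n) :
    antipignisticReverse n π (i + 1) ≤ antipignisticReverse n π i := by
  rw [antipignisticReverse_eq_add π hi]
  exact le_add_of_nonneg_left (div_nonneg (sub_nonneg.2 hπ) (by positivity))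

end Order

section CharZero

variable [CharZero 𝕜]

theorem mul_add_sum_Ico_antipignisticReverse {n i : ℕ} (π : ℕ → 𝕜) (hi : i ≤ n) :
    (i : 𝕜) * antipignisticReverse n π i + ∑ j ∈ Ico i n, antipignisticReverse n π j =
      π i - π n := by
  have hswap : ∑ j ∈ Ico i n, antipignisticReverse n π j =
      ∑ k ∈ Ico i n, ((k : 𝕜) + 1 - i) * ((π k - π (k + 1)) / ((k : 𝕜) + 1)) := by
    simp only [antipignisticReverse]
    rw [sum_Ico_Ico_comm]
    refine sum_congr rfl fun k hk ↦ ?_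
    have hik : i ≤ k + 1 := by have := (mem_Ico.1 hk).1; omega
    rw [sum_const, Nat.card_Ico, nsmul_eq_mul, Nat.cast_sub hik, Nat.cast_succ]
  have htelescope : ∑ k ∈ Ico i n, (π k - π (k + 1)) = π i - π n := by
    rw [← neg_sub, ← sum_Ico_sub (fun k ↦ π k) hi, ← sum_neg_distrib]
    simp only [neg_sub]
  rw [hswap, antipignisticReverse, mul_sum, ← sum_add_distrib, ← htelescope]
  refine sum_congr rfl fun k _ ↦ ?_
  have : (k : 𝕜) + 1 ≠ 0 := by exact_mod_cast k.succ_ne_zero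
  field_simp
  ring

theorem antipignistic_antipignisticReverse {n i : ℕ} (π : ℕ → 𝕜) (hi : i < n) :
    antipignistic n (antipignisticReverse n π) i = π i - π n := by
  rw [← mul_add_sum_Ico_antipignisticReverse π hi.le, sum_eq_sum_Ico_succ_bot hi, antipignistic]
  ring

theorem sum_range_antipignisticReverse (n : ℕ) (π : ℕ → 𝕜) :
    ∑ i ∈ range n, antipignisticReverse n π i = π 0 - π n := by
  rw [range_eq_Ico, ← mul_add_sum_Ico_antipignisticReverse π (Nat.zero_le n), Nat.cast_zero,
    zero_mul, zero_add]

end CharZero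

theorem stmt_3_general (n : ℕ) (π : ℕ → ℝ)
    (hπ0 : π 0 = 1) (hπn : π n = 0)
    (hπdec : ∀ i, i < n → π (i + 1) ≤ π i)
    (p : ℕ → ℝ)
    (hp : ∀ i, i < n → p i = ∑ j ∈ Finset.Ico i n, (π j - π (j + 1)) / ((j : ℝ) + 1)) :
    ((∀ i, i < n → 0 ≤ p i) ∧ ∑ i ∈ Finset.range n, p i = 1) ∧
    (∀ i, i + 1 < n → p (i + 1) ≤ p i) ∧
    (∀ i, i < n →
        ((i : ℝ) + 1) * p i + ∑ j ∈ Finset.Ico (i + 1) n, p j = π i) := by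
  have hsum : ∀ i, ∑ j ∈ Ico i n, p j = ∑ j ∈ Ico i n, antipignisticReverse n π j :=
    fun i ↦ sum_congr rfl fun j hj ↦ hp j (mem_Ico.1 hj).2
  refine ⟨⟨fun i hi ↦ hp i hi ▸ antipignisticReverse_nonneg hπdec i, ?_⟩, fun i hi ↦ ?_,
    fun i hi ↦ ?_⟩
  · rw [range_eq_Ico, hsum, ← range_eq_Ico, sum_range_antipignisticReverse, hπ0, hπn, sub_zero]
  · rw [hp i (by omega), hp (i + 1) hi]
    exact antipignisticReverse_succ_le (hπdec i (by omega)) (by omega)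
  · rw [hp i hi, hsum]
    change antipignistic n (antipignisticReverse n π) i = π i
    rw [antipignistic_antipignisticReverse π hi, hπn, sub_zero]

/-- Let `π ∈ [0,1]^n` satisfy `1 = π_1 ≥ π_2 ≥ … ≥ π_n ≥ 0`, with
convention `π_{n+1} := 0`, and define `p_i := ∑_{j=i}^n (π_j − π_{j+1})/j` (1-based).
Here 0-based: `π i` for `i < n` are the entries, `π n = 0` the convention, the
monotonicity hypothesis for `i = n-1` expresses `π_n ≥ 0`, and
`p i = ∑_{j=i}^{n-1} (π j − π (j+1))/(j+1)`.  Then: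
(a) `p ∈ Δ_n`; (b) `p` is nonincreasing; (c) the antipignistic transform of `p`
recovers `π`: `(i+1)·p i + ∑_{j=i+1}^{n-1} p j = π i` for every `i < n`. -/
theorem stmt_3 (n : ℕ) (hn : 0 < n) (π : ℕ → ℝ)
    (hπ0 : π 0 = 1) (hπn : π n = 0)
    (hπdec : ∀ i, i < n → π (i + 1) ≤ π i)
    (p : ℕ → ℝ)
    (hp : ∀ i, i < n → p i = ∑ j ∈ Finset.Ico i n, (π j - π (j + 1)) / ((j : ℝ) + 1)) :
    ((∀ i, i < n → 0 ≤ p i) ∧ ∑ i ∈ Finset.range n, p i = 1) ∧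
    (∀ i, i + 1 < n → p (i + 1) ≤ p i) ∧
    (∀ i, i < n →
        ((i : ℝ) + 1) * p i + ∑ j ∈ Finset.Ico (i + 1) n, p j = π i) :=
  stmt_3_general n π hπ0 hπn hπdec p hp
end

section
/- Let π ∈ (0,1]^n be a normalized possibility distribution, σ a permutation sorting π nonincreasingly, π̃_r := π_{σ(r)} with convention π̃_{n+1} := 0, A_r := {σ(1),…,σ(r)}, and ṗ the antipignistic probability vector ṗ_{σ(r)} := Σ_{j=r}^n (π̃_j − π̃_{j+1})/j. Then for every r ∈ {1,…,n−1}, Σ_{i∈A_r} ṗ_i ≥ 1 − π̃_{r+1}; that is, ṗ satisfies all the dominance constraints induced by π. -/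
open Finset

private lemma swap_sum (f : ℕ → ℝ) : ∀ r : ℕ,
    ∑ i ∈ range r, ∑ j ∈ Finset.Ico i r, f j = ∑ j ∈ range r, ((j : ℝ) + 1) * f j := by
  intro r
  induction r with
  | zero => simp
  | succ r ih =>
    rw [Finset.sum_range_succ, Finset.sum_range_succ, ← ih]
    rw [Finset.sum_congr rfl (fun i hi => by
      rw [Finset.sum_Ico_succ_top (Nat.le_of_lt (Finset.mem_range.mp hi))])]
    rw [Finset.sum_add_distrib]
    simp [Finset.sum_range_succ]
    ring

/-- With `π`, `σ`, sorted values `tpi` (0-based, convention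
`tpi n = 0`), nested sets `A_r = {σ i : i < r}` and the antipignistic vector `ṗ` as
in Statement 5, `ṗ` satisfies all the dominance constraints induced by `π`:
for every sorted position `r : Fin n` with `1 ≤ r` (the paper's `r = 1,…,n−1`),
`∑_{i ∈ A_r} ṗ_i = ∑_{i < r} ṗ(σ i) ≥ 1 − tpi r` (note `tpi r = π̃_{r+1}`,
1-based). -/
theorem stmt_7 (n : ℕ) (π : Fin n → ℝ)
    (hπpos : ∀ k, 0 < π k) (hπle : ∀ k, π k ≤ 1) (hπnorm : ∃ k, π k = 1)
    (σ : Equiv.Perm (Fin n))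
    (hσ : ∀ r s : Fin n, r ≤ s → π (σ s) ≤ π (σ r))
    (tpi : ℕ → ℝ)
    (htpi : ∀ r : Fin n, tpi (r : ℕ) = π (σ r)) (htpin : tpi n = 0)
    (pdot : Fin n → ℝ)
    (hpdot : ∀ r : Fin n,
        pdot (σ r) = ∑ j ∈ Finset.Ico (r : ℕ) n, (tpi j - tpi (j + 1)) / ((j : ℝ) + 1)) :
    ∀ r : Fin n, 1 ≤ (r : ℕ) →
      1 - tpi (r : ℕ) ≤
        ∑ i ∈ univ.filter (fun i : Fin n => (i : ℕ) < (r : ℕ)), pdot (σ i) := by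
  intro r _
  have hn : 0 < n := r.pos
  set f : ℕ → ℝ := fun j => (tpi j - tpi (j + 1)) / ((j : ℝ) + 1) with hf
  set S : ℕ → ℝ := fun i => ∑ j ∈ Finset.Ico i n, f j with hS
  -- d j ≥ 0 for j < n
  have hd : ∀ j, j < n → 0 ≤ tpi j - tpi (j + 1) := by
    intro j hj
    rcases eq_or_lt_of_le (Nat.succ_le_of_lt hj) with h | h
    · rw [show j + 1 = n from h, htpin]
      have := htpi ⟨j, hj⟩
      simp only [] at this
      rw [this]
      simpa using (hπpos (σ ⟨j, hj⟩)).le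
    · have h1 := htpi ⟨j, hj⟩
      have h2 := htpi ⟨j + 1, h⟩
      simp only [] at h1 h2
      rw [h1, h2, sub_nonneg]
      exact hσ ⟨j, hj⟩ ⟨j + 1, h⟩ (by simp)
  have hfnonneg : ∀ j, j < n → 0 ≤ f j := by
    intro j hj
    exact div_nonneg (hd j hj) (by positivity)
  have hSnonneg : 0 ≤ S (r : ℕ) := by
    apply Finset.sum_nonneg
    intro j hj
    exact hfnonneg j (Finset.mem_Ico.mp hj).2
  -- tpi 0 = 1
  have htpi0 : tpi 0 = 1 := by
    obtain ⟨k, hk⟩ := hπnorm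
    have h0 := htpi ⟨0, hn⟩
    simp only [] at h0
    have hle1 : π (σ ⟨0, hn⟩) ≤ 1 := hπle _
    have hge1 : 1 ≤ π (σ ⟨0, hn⟩) := by
      have := hσ ⟨0, hn⟩ (σ.symm k) (by simp [Fin.le_def])
      rw [Equiv.apply_symm_apply, hk] at this
      exact this
    rw [h0]; linarith
  -- rewrite the filtered sum as a range sum of S
  have hsum : ∑ i ∈ univ.filter (fun i : Fin n => (i : ℕ) < (r : ℕ)), pdot (σ i)
      = ∑ i ∈ range (r : ℕ), S i := by
    refine Finset.sum_bij' (fun a _ => (a : ℕ))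
      (fun j hj => (⟨j, lt_trans (Finset.mem_range.mp hj) r.isLt⟩ : Fin n)) ?_ ?_ ?_ ?_ ?_
    · intro a ha; simpa using (Finset.mem_filter.mp ha).2
    · intro a ha
      simp only [Finset.mem_filter, Finset.mem_univ, true_and]
      exact Finset.mem_range.mp ha
    · intro a ha; rfl
    · intro a ha; rfl
    · intro a ha; exact hpdot a
  rw [hsum]
  -- split S i for i < r
  have hsplit : ∀ i ∈ range (r : ℕ),
      S i = (∑ j ∈ Finset.Ico i (r : ℕ), f j) + S (r : ℕ) := by
    intro i hi
    rw [hS]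
    exact (Finset.sum_Ico_consecutive f (le_of_lt (Finset.mem_range.mp hi)) r.isLt.le).symm
  rw [Finset.sum_congr rfl hsplit, Finset.sum_add_distrib, Finset.sum_const,
    swap_sum, nsmul_eq_mul, Finset.card_range]
  have hterm : ∀ j ∈ range (r : ℕ), ((j : ℝ) + 1) * f j = tpi j - tpi (j + 1) := by
    intro j hj
    rw [hf]
    field_simp
  rw [Finset.sum_congr rfl hterm, Finset.sum_range_sub' tpi, htpi0]
  have : 0 ≤ ((r : ℕ) : ℝ) * S (r : ℕ) := by positivity
  linarith
end

section
/- Let π ∈ (0,1]^n be a normalized possibility distribution with sorting permutation σ, sorted values π̃_r := π_{σ(r)} (convention π̃_{n+1} := 0), nested sets A_r := {σ(1),…,σ(r)}, and gap parameters satisfying δ̲_r = δ̄_r = 0 whenever π̃_r = π̃_{r+1} and 0 < δ̲_r ≤ (π̃_r − π̃_{r+1})/r ≤ δ̄_r < 1 whenever π̃_r > π̃_{r+1}. Let F^box := {p ∈ Δ_n : Σ_{k∈A_r} p_k ≥ 1 − π̃_{r+1} and δ̲_r ≤ p_{σ(r)} − p_{σ(r+1)} ≤ δ̄_r for all r = 1,…,n−1}.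 Then every p ∈ F^box preserves the qualitative shape of π: for all k, k' ∈ {1,…,n}, π_k ≥ π_{k'} if and only if p_k ≥ p_{k'}. -/
open Finset

/-- The admissible set `F^box` (see Statement 9 context). -/
def Fbox (n : ℕ) (π : Fin n → ℝ) (σ : Equiv.Perm (Fin n)) (δlo δhi : ℕ → ℝ) :
    Set (Fin n → ℝ) :=
  {p | (∀ i, 0 ≤ p i) ∧ (∑ i, p i = 1) ∧
    (∀ r : Fin n, 1 ≤ (r : ℕ) →
      1 - π (σ r) ≤ ∑ i ∈ univ.filter (fun i : Fin n => (i : ℕ) < (r : ℕ)), p (σ i)) ∧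
    (∀ (r : ℕ) (hr : r + 1 < n),
      δlo r ≤ p (σ ⟨r, Nat.lt_of_succ_lt hr⟩) - p (σ ⟨r + 1, hr⟩) ∧
      p (σ ⟨r, Nat.lt_of_succ_lt hr⟩) - p (σ ⟨r + 1, hr⟩) ≤ δhi r)}

/-- With `π`, `σ`, sorted values `tpi` (0-based, convention
`tpi n = 0`) and gap parameters as in Statement 8, every `p ∈ F^box` preserves the
qualitative shape of `π`: for all `k, k' ∈ {1,…,n}`, `π k ≥ π k'` iff `p k ≥ p k'`. -/
theorem stmt_9 (n : ℕ) (π : Fin n → ℝ)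
    (hπpos : ∀ k, 0 < π k) (hπle : ∀ k, π k ≤ 1) (hπnorm : ∃ k, π k = 1)
    (σ : Equiv.Perm (Fin n))
    (hσ : ∀ r s : Fin n, r ≤ s → π (σ s) ≤ π (σ r))
    (tpi : ℕ → ℝ)
    (htpi : ∀ r : Fin n, tpi (r : ℕ) = π (σ r)) (htpin : tpi n = 0)
    (δlo δhi : ℕ → ℝ)
    (hgap : ∀ r, r + 1 < n →
      (tpi r = tpi (r + 1) → δlo r = 0 ∧ δhi r = 0) ∧
      (tpi (r + 1) < tpi r →
        0 < δlo r ∧ δlo r ≤ (tpi r - tpi (r + 1)) / ((r : ℝ) + 1) ∧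
        (tpi r - tpi (r + 1)) / ((r : ℝ) + 1) ≤ δhi r ∧ δhi r < 1)) :
    ∀ p ∈ Fbox n π σ δlo δhi, ∀ k k' : Fin n, π k' ≤ π k ↔ p k' ≤ p k := by
  rintro p ⟨-, -, -, hpd⟩ k k'
  have hstep : ∀ (r : ℕ) (hr : r + 1 < n),
      p (σ ⟨r+1, hr⟩) ≤ p (σ ⟨r, Nat.lt_of_succ_lt hr⟩) ∧
      (π (σ ⟨r+1, hr⟩) < π (σ ⟨r, Nat.lt_of_succ_lt hr⟩) →
        p (σ ⟨r+1, hr⟩) < p (σ ⟨r, Nat.lt_of_succ_lt hr⟩)) ∧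
      (π (σ ⟨r, Nat.lt_of_succ_lt hr⟩) = π (σ ⟨r+1, hr⟩) →
        p (σ ⟨r, Nat.lt_of_succ_lt hr⟩) = p (σ ⟨r+1, hr⟩)) := by
    intro r hr
    obtain ⟨h1, h2⟩ := hpd r hr
    have e1 : tpi r = π (σ ⟨r, Nat.lt_of_succ_lt hr⟩) := htpi ⟨r, Nat.lt_of_succ_lt hr⟩
    have e2 : tpi (r+1) = π (σ ⟨r+1, hr⟩) := htpi ⟨r+1, hr⟩
    have hmono : tpi (r+1) ≤ tpi r := by
      rw [e1, e2]
      exact hσ ⟨r, Nat.lt_of_succ_lt hr⟩ ⟨r+1, hr⟩ (by simp [Fin.le_def])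
    rcases eq_or_lt_of_le hmono with heq | hlt
    · obtain ⟨hd1, hd2⟩ := (hgap r hr).1 heq.symm
      have hdiff : p (σ ⟨r, Nat.lt_of_succ_lt hr⟩) - p (σ ⟨r+1, hr⟩) = 0 := by linarith
      refine ⟨by linarith, fun h => absurd h (by rw [← e1, ← e2, heq]; exact lt_irrefl _), fun _ => by linarith⟩
    · have hd := ((hgap r hr).2 hlt).1
      refine ⟨by linarith, fun _ => by linarith, fun h => absurd h ?_⟩
      rw [← e1, ← e2]; exact ne_of_gt hlt
  have main : ∀ (b : ℕ) (hb : b < n) (a : ℕ) (hab : a ≤ b),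
      p (σ ⟨b, hb⟩) ≤ p (σ ⟨a, lt_of_le_of_lt hab hb⟩) ∧
      (π (σ ⟨b, hb⟩) < π (σ ⟨a, lt_of_le_of_lt hab hb⟩) →
        p (σ ⟨b, hb⟩) < p (σ ⟨a, lt_of_le_of_lt hab hb⟩)) ∧
      (π (σ ⟨a, lt_of_le_of_lt hab hb⟩) = π (σ ⟨b, hb⟩) →
        p (σ ⟨a, lt_of_le_of_lt hab hb⟩) = p (σ ⟨b, hb⟩)) := by
    intro b
    induction b with
    | zero =>
      intro hb a hab
      have : a = 0 := Nat.le_zero.mp hab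
      subst this
      exact ⟨le_refl _, fun h => absurd h (lt_irrefl _), fun _ => rfl⟩
    | succ b ih =>
      intro hb a hab
      rcases Nat.lt_or_ge a (b+1) with h | h
      · have hab' : a ≤ b := Nat.lt_succ_iff.mp h
        have hb' : b < n := Nat.lt_of_succ_lt hb
        obtain ⟨m1, s1, e1⟩ := ih hb' a hab'
        obtain ⟨sm, ss, se⟩ := hstep b hb
        have hπm : π (σ ⟨b+1, hb⟩) ≤ π (σ ⟨b, hb'⟩) :=
          hσ ⟨b, hb'⟩ ⟨b+1, hb⟩ (by simp [Fin.le_def])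
        have hπm2 : π (σ ⟨b, hb'⟩) ≤ π (σ ⟨a, lt_of_le_of_lt hab hb⟩) :=
          hσ ⟨a, _⟩ ⟨b, hb'⟩ (by simp [Fin.le_def, hab'])
        refine ⟨le_trans sm m1, ?_, ?_⟩
        · intro hlt
          rcases eq_or_lt_of_le hπm with heq | hlt'
          · have hpe : p (σ ⟨b, hb'⟩) = p (σ ⟨b+1, hb⟩) := se heq.symm
            have : π (σ ⟨b, hb'⟩) < π (σ ⟨a, lt_of_le_of_lt hab hb⟩) := by
              linarith
            calc p (σ ⟨b+1, hb⟩) = p (σ ⟨b, hb'⟩) := hpe.symm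
              _ < _ := s1 this
          · exact lt_of_lt_of_le (ss hlt') m1
        · intro heq
          have h1 : π (σ ⟨b, hb'⟩) = π (σ ⟨b+1, hb⟩) := le_antisymm (by linarith) hπm
          have h2 : π (σ ⟨a, lt_of_le_of_lt hab hb⟩) = π (σ ⟨b, hb'⟩) := by linarith
          rw [e1 h2, se h1]
      · have : a = b + 1 := le_antisymm hab h
        subst this
        exact ⟨le_refl _, fun h => absurd h (lt_irrefl _), fun _ => rfl⟩
  set r := σ.symm k with hr
  set s := σ.symm k' with hs
  have hk : σ r = k := σ.apply_symm_apply k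
  have hk' : σ s = k' := σ.apply_symm_apply k'
  rcases le_total r s with h | h
  · have h1 : π k' ≤ π k := by rw [← hk, ← hk']; exact hσ r s h
    have h2 : p k' ≤ p k := by
      rw [← hk, ← hk']
      exact (main s.val s.isLt r.val h).1
    exact iff_of_true h1 h2
  · obtain ⟨m, st, eqq⟩ := main r.val r.isLt s.val h
    have hπm : π k ≤ π k' := by rw [← hk, ← hk']; exact hσ s r h
    constructor
    · intro h1
      have : π (σ ⟨s.val, lt_of_le_of_lt h r.isLt⟩) = π (σ ⟨r.val, r.isLt⟩) := by
        show π (σ s) = π (σ r)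
        rw [hk, hk']; linarith
      have := eqq this
      rw [hk, hk'] at this
      exact le_of_eq this
    · intro h2
      by_contra hc
      push_neg at hc
      have : p k < p k' := by
        have := st (by rw [hk, hk'] at *; exact hc)
        rw [hk, hk'] at this; exact this
      linarith
end

section
/- Let π ∈ (0,1]^n be a normalized possibility distribution with sorting permutation σ, sorted values π̃_r := π_{σ(r)} (convention π̃_{n+1} := 0), nested sets A_r := {σ(1),…,σ(r)}, and gap parameters satisfying δ̲_r = δ̄_r = 0 whenever π̃_r = π̃_{r+1} and 0 < δ̲_r ≤ (π̃_r − π̃_{r+1})/r ≤ δ̄_r < 1 whenever π̃_r > π̃_{r+1}. Then the admissible set F^box := {p ∈ Δ_n : Σ_{k∈A_r} p_k ≥ 1 − π̃_{r+1} and δ̲_r ≤ p_{σ(r)} − p_{σ(r+1)} ≤ δ̄_r for all r = 1,…,n−1} is a closed convex subset of Δ_n that contains the antipignistic probability vector ṗ defined by ṗ_{σ(r)} := Σ_{j=r}^n (π̃_j − π̃_{j+1})/j. -/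
open Finset

/-- Telescoping double-sum identity. -/
lemma aux_double_sum (N : ℕ) (tpi : ℕ → ℝ) :
    ∑ r ∈ Finset.range N, ∑ j ∈ Finset.Ico r N, (tpi j - tpi (j + 1)) / ((j : ℝ) + 1)
      = tpi 0 - tpi N := by
  rw [Finset.range_eq_Ico, Finset.sum_Ico_Ico_comm]
  have h : ∀ j ∈ Finset.Ico 0 N,
      ∑ _i ∈ Finset.Ico 0 (j + 1), (tpi j - tpi (j + 1)) / ((j : ℝ) + 1)
        = tpi j - tpi (j + 1) := by
    intro j _
    rw [Finset.sum_const, Nat.card_Ico, Nat.sub_zero, nsmul_eq_mul]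
    have hj1 : ((j : ℝ) + 1) ≠ 0 := by positivity
    push_cast
    field_simp
  rw [Finset.sum_congr rfl h, ← Finset.range_eq_Ico, Finset.sum_range_sub' tpi N]

/-- With `π`, `σ`, sorted values `tpi`, gap parameters as in
Statement 8, and the antipignistic vector `ṗ`, the admissible set `F^box` is a
closed convex subset of the probability simplex `Δ_n` containing `ṗ`. -/
theorem stmt_10 (n : ℕ) (π : Fin n → ℝ)
    (hπpos : ∀ k, 0 < π k) (hπle : ∀ k, π k ≤ 1) (hπnorm : ∃ k, π k = 1)
    (σ : Equiv.Perm (Fin n))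
    (hσ : ∀ r s : Fin n, r ≤ s → π (σ s) ≤ π (σ r))
    (tpi : ℕ → ℝ)
    (htpi : ∀ r : Fin n, tpi (r : ℕ) = π (σ r)) (htpin : tpi n = 0)
    (pdot : Fin n → ℝ)
    (hpdot : ∀ r : Fin n,
        pdot (σ r) = ∑ j ∈ Finset.Ico (r : ℕ) n, (tpi j - tpi (j + 1)) / ((j : ℝ) + 1))
    (δlo δhi : ℕ → ℝ)
    (hgap : ∀ r, r + 1 < n →
      (tpi r = tpi (r + 1) → δlo r = 0 ∧ δhi r = 0) ∧
      (tpi (r + 1) < tpi r →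
        0 < δlo r ∧ δlo r ≤ (tpi r - tpi (r + 1)) / ((r : ℝ) + 1) ∧
        (tpi r - tpi (r + 1)) / ((r : ℝ) + 1) ≤ δhi r ∧ δhi r < 1)) :
    IsClosed (Fbox n π σ δlo δhi) ∧ Convex ℝ (Fbox n π σ δlo δhi) ∧
      Fbox n π σ δlo δhi ⊆ stdSimplex ℝ (Fin n) ∧
      pdot ∈ Fbox n π σ δlo δhi := by
  classical
  -- Closedness
  have key : ∀ {P : Prop} (Q : P → (Fin n → ℝ) → Prop),
      (∀ hp : P, IsClosed {x | Q hp x}) → IsClosed {x : Fin n → ℝ | ∀ hp : P, Q hp x} := by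
    intro P Q h
    by_cases hp : P
    · have he : {x : Fin n → ℝ | ∀ hp' : P, Q hp' x} = {x | Q hp x} :=
        Set.ext fun x => ⟨fun h' => h' hp, fun hq _ => hq⟩
      rw [he]; exact h hp
    · have he : {x : Fin n → ℝ | ∀ hp' : P, Q hp' x} = Set.univ :=
        Set.eq_univ_of_forall fun x hp' => absurd hp' hp
      rw [he]; exact isClosed_univ
  have hclosed : IsClosed (Fbox n π σ δlo δhi) := by
    unfold Fbox
    simp only [Set.setOf_and]
    refine IsClosed.inter ?_ (IsClosed.inter ?_ (IsClosed.inter ?_ ?_))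
    · rw [Set.setOf_forall]
      exact isClosed_iInter fun i => isClosed_le continuous_const (continuous_apply i)
    · exact isClosed_eq (continuous_finset_sum _ fun i _ => continuous_apply i)
        continuous_const
    · rw [Set.setOf_forall]
      refine isClosed_iInter fun r => ?_
      exact key (fun _ p => 1 - π (σ r) ≤
          ∑ i ∈ univ.filter (fun i : Fin n => (i : ℕ) < (r : ℕ)), p (σ i))
        (fun _ => isClosed_le continuous_const
          (continuous_finset_sum _ fun i _ => continuous_apply (σ i)))
    · rw [Set.setOf_forall]
      refine isClosed_iInter fun r => ?_
      refine key (fun hr p =>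
          δlo r ≤ p (σ ⟨r, Nat.lt_of_succ_lt hr⟩) - p (σ ⟨r + 1, hr⟩) ∧
          p (σ ⟨r, Nat.lt_of_succ_lt hr⟩) - p (σ ⟨r + 1, hr⟩) ≤ δhi r) (fun hr => ?_)
      rw [Set.setOf_and]
      refine IsClosed.inter
        (isClosed_le continuous_const
          ((continuous_apply (σ ⟨r, Nat.lt_of_succ_lt hr⟩)).sub
            (continuous_apply (σ ⟨r + 1, hr⟩))))
        (isClosed_le
          ((continuous_apply (σ ⟨r, Nat.lt_of_succ_lt hr⟩)).sub
            (continuous_apply (σ ⟨r + 1, hr⟩)))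
          continuous_const)
  -- Convexity
  have hconvex : Convex ℝ (Fbox n π σ δlo δhi) := by
    intro p hp q hq a b ha hb hab
    obtain ⟨hp0, hp1, hp2, hp3⟩ := hp
    obtain ⟨hq0, hq1, hq2, hq3⟩ := hq
    refine ⟨?_, ?_, ?_, ?_⟩
    · intro i
      simp only [Pi.add_apply, Pi.smul_apply, smul_eq_mul]
      have := mul_nonneg ha (hp0 i)
      have := mul_nonneg hb (hq0 i)
      linarith
    · simp only [Pi.add_apply, Pi.smul_apply, smul_eq_mul]
      rw [Finset.sum_add_distrib, ← Finset.mul_sum, ← Finset.mul_sum, hp1, hq1]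
      linarith
    · intro r hr
      have h1 := hp2 r hr
      have h2 := hq2 r hr
      simp only [Pi.add_apply, Pi.smul_apply, smul_eq_mul]
      rw [Finset.sum_add_distrib, ← Finset.mul_sum, ← Finset.mul_sum]
      have e1 := mul_le_mul_of_nonneg_left h1 ha
      have e2 := mul_le_mul_of_nonneg_left h2 hb
      have e3 : a * (1 - π (σ r)) + b * (1 - π (σ r)) = 1 - π (σ r) := by
        rw [← add_mul, hab, one_mul]
      linarith
    · intro r hr
      obtain ⟨h1, h2⟩ := hp3 r hr
      obtain ⟨h3, h4⟩ := hq3 r hr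
      simp only [Pi.add_apply, Pi.smul_apply, smul_eq_mul]
      have e3 : a * δlo r + b * δlo r = δlo r := by rw [← add_mul, hab, one_mul]
      have e4 : a * δhi r + b * δhi r = δhi r := by rw [← add_mul, hab, one_mul]
      constructor
      · have e1 := mul_le_mul_of_nonneg_left h1 ha
        have e2 := mul_le_mul_of_nonneg_left h3 hb
        nlinarith [e1, e2, e3]
      · have e1 := mul_le_mul_of_nonneg_left h2 ha
        have e2 := mul_le_mul_of_nonneg_left h4 hb
        nlinarith [e1, e2, e4]
  -- Subset of simplex
  have hsub : Fbox n π σ δlo δhi ⊆ stdSimplex ℝ (Fin n) := fun p hp => ⟨hp.1, hp.2.1⟩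
  -- Membership of pdot
  have hn : 0 < n := by obtain ⟨k, _⟩ := hπnorm; exact k.pos
  have htpi0 : tpi 0 = 1 := by
    obtain ⟨k, hk⟩ := hπnorm
    have h0 : tpi 0 = π (σ ⟨0, hn⟩) := htpi ⟨0, hn⟩
    have hle : π (σ (σ.symm k)) ≤ π (σ ⟨0, hn⟩) :=
      hσ _ _ (Fin.le_def.mpr (Nat.zero_le _))
    rw [Equiv.apply_symm_apply, hk] at hle
    have := hπle (σ ⟨0, hn⟩)
    linarith
  have hmono : ∀ j, j < n → tpi (j + 1) ≤ tpi j := by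
    intro j hj
    by_cases h : j + 1 < n
    · have h2 := hσ ⟨j, hj⟩ ⟨j + 1, h⟩ (Fin.le_def.mpr (Nat.le_succ j))
      rw [← htpi ⟨j, hj⟩, ← htpi ⟨j + 1, h⟩] at h2
      exact h2
    · have hjn : j + 1 = n := le_antisymm (Nat.succ_le_of_lt hj) (not_lt.mp h)
      rw [hjn, htpin, htpi ⟨j, hj⟩]
      exact le_of_lt (hπpos _)
  have hterm : ∀ j, j < n → 0 ≤ (tpi j - tpi (j + 1)) / ((j : ℝ) + 1) := by
    intro j hj
    exact div_nonneg (sub_nonneg.2 (hmono j hj)) (by positivity)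
  have hpdot' : ∀ i : Fin n,
      pdot i = ∑ j ∈ Finset.Ico ((σ.symm i : Fin n) : ℕ) n,
        (tpi j - tpi (j + 1)) / ((j : ℝ) + 1) := by
    intro i
    have := hpdot (σ.symm i)
    rwa [Equiv.apply_symm_apply] at this
  refine ⟨hclosed, hconvex, hsub, ?_, ?_, ?_, ?_⟩
  · -- nonnegativity of pdot
    intro i
    rw [hpdot' i]
    exact Finset.sum_nonneg fun j hj => hterm j (Finset.mem_Ico.mp hj).2
  · -- sum of pdot is 1
    rw [← Equiv.sum_comp σ pdot]
    calc ∑ r : Fin n, pdot (σ r)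
        = ∑ r : Fin n, ∑ j ∈ Finset.Ico ((r : Fin n) : ℕ) n,
            (tpi j - tpi (j + 1)) / ((j : ℝ) + 1) :=
          Finset.sum_congr rfl fun r _ => hpdot r
      _ = ∑ r ∈ Finset.range n, ∑ j ∈ Finset.Ico r n,
            (tpi j - tpi (j + 1)) / ((j : ℝ) + 1) :=
          Fin.sum_univ_eq_sum_range
            (fun r => ∑ j ∈ Finset.Ico r n, (tpi j - tpi (j + 1)) / ((j : ℝ) + 1)) n
      _ = tpi 0 - tpi n := aux_double_sum n tpi
      _ = 1 := by rw [htpi0, htpin]; ring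
  · -- nested-set (cumulative) constraints
    intro r _
    have hRn : (r : ℕ) ≤ n := le_of_lt r.isLt
    have hstep : ∑ i ∈ univ.filter (fun i : Fin n => (i : ℕ) < (r : ℕ)), pdot (σ i)
        = ∑ m ∈ Finset.range (r : ℕ), ∑ j ∈ Finset.Ico m n,
            (tpi j - tpi (j + 1)) / ((j : ℝ) + 1) := by
      calc ∑ i ∈ univ.filter (fun i : Fin n => (i : ℕ) < (r : ℕ)), pdot (σ i)
          = ∑ i ∈ univ.filter (fun i : Fin n => (i : ℕ) < (r : ℕ)),
              ∑ j ∈ Finset.Ico ((i : Fin n) : ℕ) n,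
                (tpi j - tpi (j + 1)) / ((j : ℝ) + 1) :=
            Finset.sum_congr rfl fun i _ => hpdot i
        _ = ∑ i : Fin n, if ((i : Fin n) : ℕ) < (r : ℕ) then
              ∑ j ∈ Finset.Ico ((i : Fin n) : ℕ) n,
                (tpi j - tpi (j + 1)) / ((j : ℝ) + 1) else 0 := Finset.sum_filter _ _
        _ = ∑ m ∈ Finset.range n, if m < (r : ℕ) then
              ∑ j ∈ Finset.Ico m n, (tpi j - tpi (j + 1)) / ((j : ℝ) + 1) else 0 :=
            Fin.sum_univ_eq_sum_range
              (fun m => if m < (r : ℕ) then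
                ∑ j ∈ Finset.Ico m n, (tpi j - tpi (j + 1)) / ((j : ℝ) + 1) else 0) n
        _ = ∑ m ∈ Finset.range (r : ℕ), ∑ j ∈ Finset.Ico m n,
              (tpi j - tpi (j + 1)) / ((j : ℝ) + 1) := by
            rw [← Finset.sum_filter]
            congr 1
            ext m
            simp only [Finset.mem_filter, Finset.mem_range]
            omega
    have hsplit : ∀ m ∈ Finset.range (r : ℕ),
        ∑ j ∈ Finset.Ico m n, (tpi j - tpi (j + 1)) / ((j : ℝ) + 1)
          = (∑ j ∈ Finset.Ico m (r : ℕ), (tpi j - tpi (j + 1)) / ((j : ℝ) + 1))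
            + ∑ j ∈ Finset.Ico (r : ℕ) n, (tpi j - tpi (j + 1)) / ((j : ℝ) + 1) := by
      intro m hm
      rw [Finset.sum_Ico_consecutive _ (le_of_lt (Finset.mem_range.mp hm)) hRn]
    rw [hstep, Finset.sum_congr rfl hsplit, Finset.sum_add_distrib, Finset.sum_const,
      Finset.card_range, aux_double_sum (r : ℕ) tpi, htpi0]
    have hπr : tpi (r : ℕ) = π (σ r) := htpi r
    have h2 : 0 ≤ (r : ℕ) •
        ∑ j ∈ Finset.Ico (r : ℕ) n, (tpi j - tpi (j + 1)) / ((j : ℝ) + 1) :=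
      nsmul_nonneg (Finset.sum_nonneg fun j hj => hterm j (Finset.mem_Ico.mp hj).2) (r : ℕ)
    linarith
  · -- gap constraints
    intro r hr
    have hrn : r < n := Nat.lt_of_succ_lt hr
    have hd : pdot (σ ⟨r, hrn⟩) - pdot (σ ⟨r + 1, hr⟩)
        = (tpi r - tpi (r + 1)) / ((r : ℝ) + 1) := by
      rw [hpdot ⟨r, hrn⟩, hpdot ⟨r + 1, hr⟩]
      simp only []
      rw [Finset.sum_eq_sum_Ico_succ_bot hrn]
      ring
    have hle := hmono r hrn
    rcases eq_or_lt_of_le hle with heq | hlt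
    · obtain ⟨hl0, hh0⟩ := (hgap r hr).1 heq.symm
      rw [hd, hl0, hh0, ← heq]
      norm_num
    · obtain ⟨_, h2, h3, _⟩ := (hgap r hr).2 hlt
      rw [hd]
      exact ⟨h2, h3⟩
end

section
/- Let b ∈ ℝ, v ∈ ℝ^n, and C := {x ∈ Δ_n : ⟨x, v⟩ ≥ b}, and assume C ∩ ℝ^n_{++} ≠ ∅. Let z ∈ ℝ^n_{++} and suppose ẑ ∈ C ∩ ℝ^n_{++} is a minimizer over C of x ↦ D_f(x, z) = Σ_k x_k log(x_k/z_k) − Σ_k x_k + Σ_k z_k. Then there exists a pair (λ, ν) ∈ ℝ_+ × ℝ such that ẑ_k = e^{λ·v_k + ν}·z_k for all k ∈ {1,…,n}, and moreover if b < ⟨ẑ, v⟩ then λ = 0. -/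
/-- The Bregman distance associated with the negative entropy:
`D_f(x,y) = ∑_k x_k log(x_k / y_k) − ∑_k x_k + ∑_k y_k`. -/
noncomputable def Df (n : ℕ) (x y : Fin n → ℝ) : ℝ :=
  ∑ k, x k * Real.log (x k / y k) - ∑ k, x k + ∑ k, y k

/-!
Write `a_k = log (ẑ_k / z_k)`, so that `a + 1` is the gradient of `D_f(·, z)` at `ẑ`. Since `ẑ`
lies in the interior of the orthant, `ẑ + t d` stays in `C` for small `t > 0` whenever `∑ d = 0`
and either `⟨d, v⟩ ≥ 0` or the constraint `⟨ẑ, v⟩ ≥ b` is slack, so Fermat's rule gives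
`⟨d, a⟩ ≥ 0` for all such `d`. Testing this with `e_j - e_k` and with three-point directions
orthogonal to both `1` and `v` shows that `a = λ v + ν` with `λ ≥ 0`, and that `a` is constant
when the constraint is slack.
-/

open Filter Set Topology Matrix Real

section LinearAlgebra

variable {ι : Type*} [Fintype ι] [DecidableEq ι]

theorem single_sub_single_dotProduct (j k : ι) (w : ι → ℝ) :
    (Pi.single j 1 - Pi.single k 1) ⬝ᵥ w = w j - w k := by
  simp [sub_dotProduct, single_dotProduct]

theorem exists_affine_of_dotProduct_nonneg {a v : ι → ℝ} {P : Prop}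
    (h : ∀ d : ι → ℝ, d ⬝ᵥ 1 = 0 → (0 ≤ d ⬝ᵥ v ∨ P) → 0 ≤ d ⬝ᵥ a) :
    ∃ lam nu : ℝ, 0 ≤ lam ∧ (∀ k, a k = lam * v k + nu) ∧ (P → lam = 0) := by
  have pair : ∀ j k, (v k ≤ v j ∨ P) → a k ≤ a j := by
    intro j k hjk
    have := h (Pi.single j 1 - Pi.single k 1)
    simp only [single_sub_single_dotProduct, Pi.one_apply, sub_self, sub_nonneg] at this
    exact this trivial hjk
  by_cases hconst : ∀ j k, v k ≤ v j ∨ P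
  · obtain ⟨nu, hnu⟩ : ∃ nu, ∀ k, a k = nu := by
      rcases isEmpty_or_nonempty ι with _ | ⟨⟨i⟩⟩
      · exact ⟨0, isEmptyElim⟩
      · exact ⟨a i, fun k => le_antisymm (pair i k (hconst i k)) (pair k i (hconst k i))⟩
    exact ⟨0, nu, le_rfl, fun k => by simp [hnu], fun _ => rfl⟩
  push Not at hconst
  obtain ⟨q, p, hvqp, hP⟩ := hconst
  have orth : ∀ d : ι → ℝ, d ⬝ᵥ 1 = 0 → d ⬝ᵥ v = 0 → d ⬝ᵥ a = 0 := fun d h1 hv =>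
    le_antisymm
      (by simpa [neg_dotProduct, h1, hv] using h (-d) (by simp [h1]) (Or.inl (by simp [hv])))
      (h d h1 (Or.inl hv.ge))
  have hvpq : 0 < v p - v q := sub_pos.2 hvqp
  refine ⟨(a p - a q) / (v p - v q), a p - (a p - a q) / (v p - v q) * v p,
    div_nonneg (sub_nonneg.2 (pair p q (Or.inl hvqp.le))) hvpq.le, fun k => ?_,
    fun hP' => absurd hP' hP⟩
  -- weighting `e_k, e_p, e_q` by the cofactors of the rows `1, v` gives a vector orthogonal to both
  set d : ι → ℝ := (v p - v q) • Pi.single k 1 + (v q - v k) • Pi.single p 1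
    + (v k - v p) • Pi.single q 1
  have hd : ∀ w, d ⬝ᵥ w = (v p - v q) * w k + (v q - v k) * w p + (v k - v p) * w q := by
    simp [d, add_dotProduct, smul_dotProduct, single_dotProduct]
  have hk := orth d (by rw [hd]; simp only [Pi.one_apply]; ring) (by rw [hd]; ring)
  rw [hd] at hk
  field_simp
  linear_combination hk

end LinearAlgebra

theorem hasDerivAt_mul_log_div_line {x y d : ℝ} (hx : x ≠ 0) (hy : y ≠ 0) :
    HasDerivAt (fun t : ℝ => (x + t * d) * log ((x + t * d) / y))
      (d * (log (x / y) + 1)) 0 := by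
  have hline : HasDerivAt (fun t : ℝ => x + t * d) d 0 := by
    simpa using ((hasDerivAt_id (0 : ℝ)).mul_const d).const_add x
  refine (hline.mul ((hline.div_const y).log ?_)).congr_deriv ?_
  · simpa using div_ne_zero hx hy
  · simp only [zero_mul, add_zero]
    field_simp

theorem hasDerivAt_Df_add_smul {n : ℕ} {x y : Fin n → ℝ} (d : Fin n → ℝ)
    (hx : ∀ k, x k ≠ 0) (hy : ∀ k, y k ≠ 0) :
    HasDerivAt (fun t : ℝ => Df n (x + t • d) y) (d ⬝ᵥ fun k => log (x k / y k)) 0 := by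
  have hsum : HasDerivAt (fun t : ℝ => ∑ k, (x k + t * d k)) (∑ k, d k) 0 :=
    HasDerivAt.fun_sum fun k _ => by
      simpa using ((hasDerivAt_id (0 : ℝ)).mul_const (d k)).const_add (x k)
  have hent : HasDerivAt (fun t : ℝ => ∑ k, (x k + t * d k) * log ((x k + t * d k) / y k))
      (∑ k, d k * (log (x k / y k) + 1)) 0 :=
    HasDerivAt.fun_sum fun k _ => hasDerivAt_mul_log_div_line (hx k) (hy k)
  refine ((hent.sub hsum).add_const (∑ k, y k)).congr_deriv ?_
  simp only [dotProduct, mul_add, mul_one, Finset.sum_add_distrib, add_sub_cancel_right]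

theorem dotProduct_log_div_nonneg_of_forall_Df_le {n : ℕ} {C : Set (Fin n → ℝ)}
    {x y d : Fin n → ℝ} (hx : ∀ k, x k ≠ 0) (hy : ∀ k, y k ≠ 0)
    (hmin : ∀ w ∈ C, Df n x y ≤ Df n w y) (hfeas : ∀ᶠ t : ℝ in 𝓝[>] 0, x + t • d ∈ C) :
    0 ≤ d ⬝ᵥ fun k => log (x k / y k) := by
  have hloc : IsLocalMinOn (fun t : ℝ => Df n (x + t • d) y) {t | x + t • d ∈ C} 0 :=
    eventually_of_mem self_mem_nhdsWithin fun t ht => by simpa using hmin _ ht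
  have hcone : (1 : ℝ) ∈ posTangentConeAt {t | x + t • d ∈ C} 0 :=
    one_mem_posTangentConeAt_iff_frequently.2 hfeas.frequently
  simpa using hloc.hasFDerivWithinAt_nonneg
    (hasDerivAt_Df_add_smul d hx hy).hasFDerivAt.hasFDerivWithinAt hcone

def simplexHalfspace {ι : Type*} [Fintype ι] (b : ℝ) (v : ι → ℝ) : Set (ι → ℝ) :=
  {x | (∀ k, 0 ≤ x k) ∧ (∑ k, x k = 1) ∧ b ≤ ∑ k, x k * v k}

theorem eventually_add_smul_mem_simplexHalfspace {ι : Type*} [Fintype ι] {b : ℝ}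
    {v x d : ι → ℝ} (hx : x ∈ simplexHalfspace b v) (hxpos : ∀ k, 0 < x k)
    (hd : d ⬝ᵥ 1 = 0) (hdv : 0 ≤ d ⬝ᵥ v ∨ b < x ⬝ᵥ v) :
    ∀ᶠ t : ℝ in 𝓝[>] 0, x + t • d ∈ simplexHalfspace b v := by
  obtain ⟨-, hx1, hxv⟩ := hx
  have hpos : ∀ᶠ t in 𝓝 (0 : ℝ), ∀ k, 0 < x k + t * d k := by
    rw [eventually_all]
    intro k
    exact (continuous_const.add (continuous_id.mul continuous_const)).continuousAt.eventually
      (eventually_gt_nhds (by simpa using hxpos k))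
  have hcons : ∀ᶠ t in 𝓝[>] 0, b ≤ x ⬝ᵥ v + t * (d ⬝ᵥ v) := by
    rcases hdv with hdv | hxv'
    · filter_upwards [self_mem_nhdsWithin] with t ht
      nlinarith [show b ≤ x ⬝ᵥ v from hxv, mem_Ioi.1 ht]
    · refine Eventually.filter_mono nhdsWithin_le_nhds ?_
      exact (continuous_const.add (continuous_id.mul continuous_const)).continuousAt.eventually
        (eventually_ge_nhds (by simpa using hxv'))
  filter_upwards [hpos.filter_mono nhdsWithin_le_nhds, hcons] with t hpos hcons
  refine ⟨fun k => (hpos k).le, ?_, ?_⟩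
  · rw [← dotProduct_one, add_dotProduct, smul_dotProduct, hd, dotProduct_one, hx1]
    simp
  · show b ≤ (x + t • d) ⬝ᵥ v
    rwa [add_dotProduct, smul_dotProduct, smul_eq_mul]

theorem stmt_15_general (n : ℕ) (b : ℝ) (v : Fin n → ℝ)
    (C : Set (Fin n → ℝ))
    (hC : C = {x | (∀ k, 0 ≤ x k) ∧ (∑ k, x k = 1) ∧ b ≤ ∑ k, x k * v k})
    (z : Fin n → ℝ) (hz : ∀ k, 0 < z k)
    (zhat : Fin n → ℝ) (hzhatC : zhat ∈ C) (hzhatpos : ∀ k, 0 < zhat k)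
    (hmin : ∀ x ∈ C, Df n zhat z ≤ Df n x z) :
    ∃ lam nu : ℝ, 0 ≤ lam ∧
      (∀ k, zhat k = Real.exp (lam * v k + nu) * z k) ∧
      (b < ∑ k, zhat k * v k → lam = 0) := by
  subst hC
  have hkkt : ∀ d : Fin n → ℝ, d ⬝ᵥ 1 = 0 → (0 ≤ d ⬝ᵥ v ∨ b < zhat ⬝ᵥ v) →
      0 ≤ d ⬝ᵥ fun k => log (zhat k / z k) := fun d hd hdv =>
    dotProduct_log_div_nonneg_of_forall_Df_le (fun k => (hzhatpos k).ne') (fun k => (hz k).ne')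
      hmin (eventually_add_smul_mem_simplexHalfspace hzhatC hzhatpos hd hdv)
  obtain ⟨lam, nu, hlam, hlog, hinactive⟩ := exists_affine_of_dotProduct_nonneg hkkt
  refine ⟨lam, nu, hlam, fun k => ?_, hinactive⟩
  rw [← hlog k, exp_log (div_pos (hzhatpos k) (hz k)), div_mul_cancel₀ _ (hz k).ne']

/-- **KKT representation.** Let `C = {x ∈ Δ_n : ⟨x,v⟩ ≥ b}` with
`C ∩ ℝ^n_{++} ≠ ∅`, let `z ∈ ℝ^n_{++}`, and suppose `ẑ ∈ C ∩ ℝ^n_{++}` minimizes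
`D_f(·, z)` over `C`. Then there is a pair `(λ, ν) ∈ ℝ₊ × ℝ` with
`ẑ_k = e^{λ v_k + ν} z_k` for all `k`, and `λ = 0` whenever `b < ⟨ẑ, v⟩`. -/
theorem stmt_15 (n : ℕ) (b : ℝ) (v : Fin n → ℝ)
    (C : Set (Fin n → ℝ))
    (hC : C = {x | (∀ k, 0 ≤ x k) ∧ (∑ k, x k = 1) ∧ b ≤ ∑ k, x k * v k})
    (hCpos : ∃ w ∈ C, ∀ k, 0 < w k)
    (z : Fin n → ℝ) (hz : ∀ k, 0 < z k)
    (zhat : Fin n → ℝ) (hzhatC : zhat ∈ C) (hzhatpos : ∀ k, 0 < zhat k)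
    (hmin : ∀ x ∈ C, Df n zhat z ≤ Df n x z) :
    ∃ lam nu : ℝ, 0 ≤ lam ∧
      (∀ k, zhat k = Real.exp (lam * v k + nu) * z k) ∧
      (b < ∑ k, zhat k * v k → lam = 0) :=
  stmt_15_general n b v C hC z hz zhat hzhatC hzhatpos hmin
end

section
/- Let 0 < ω < 1, 0 < ω' < 1 and −1 < δ < 1, and set u := 1 − ω − ω'. Assume ω − ω' < δ and u ≥ 0. Then the quadratic polynomial ω(1−δ)x² − uδx − ω'(1+δ) has exactly one strictly positive root E; this E is the unique strictly positive solution of the equation (ωx − ω'x⁻¹)/(ωx + ω'x⁻¹ + u) = δ, and E > 1. -/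
/-!
Clearing the denominator turns the rational equation into the quadratic
`q(x) = a x² - b x - c` with `a = ω(1-δ) > 0` and `c = ω'(1+δ) > 0`. Such a quadratic has
exactly one positive root `E`: at a positive root `x(ax - b) = c > 0`, so `q(x) - q(y)`
factors as `(x - y)(a(x + y) - b)` with a positive second factor. The same factorisation
shows `t < E` whenever `t > 0` and `q(t) < 0`, and `q(1) = ω - ω' - δ < 0`.
-/

namespace PosRootQuadratic

variable {a b c : ℝ}

lemma mul_sub_pos_of_root (hc : 0 < c) {x : ℝ} (hx : 0 < x)
    (hroot : a * x ^ 2 - b * x - c = 0) : 0 < a * x - b :=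
  pos_of_mul_pos_right (by linear_combination hc - hroot : 0 < x * (a * x - b)) hx.le

lemma exists_pos_root (ha : 0 < a) (hc : 0 < c) :
    ∃ x, 0 < x ∧ a * x ^ 2 - b * x - c = 0 := by
  set s := Real.sqrt (b ^ 2 + 4 * a * c)
  have hs : s ^ 2 = b ^ 2 + 4 * a * c := Real.sq_sqrt (by positivity)
  have hbs : |b| < s := by
    apply abs_lt_of_sq_lt_sq _ (Real.sqrt_nonneg _)
    nlinarith
  refine ⟨(b + s) / (2 * a), div_pos (by linarith [neg_abs_le b]) (by positivity), ?_⟩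
  field_simp
  linear_combination hs

lemma eq_of_pos_roots (ha : 0 < a) (hc : 0 < c) {x y : ℝ} (hx : 0 < x) (hy : 0 < y)
    (hxroot : a * x ^ 2 - b * x - c = 0) (hyroot : a * y ^ 2 - b * y - c = 0) : x = y := by
  have hfactor : (x - y) * (a * (x + y) - b) = 0 := by linear_combination hxroot - hyroot
  have hpos : 0 < a * (x + y) - b := by
    nlinarith [mul_sub_pos_of_root hc hy hyroot]
  linarith [(mul_eq_zero.1 hfactor).resolve_right hpos.ne']

lemma existsUnique_pos_root (ha : 0 < a) (hc : 0 < c) :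
    ∃! x, 0 < x ∧ a * x ^ 2 - b * x - c = 0 := by
  obtain ⟨x, hx, hroot⟩ := exists_pos_root (b := b) ha hc
  exact ⟨x, ⟨hx, hroot⟩, fun y ⟨hy, hyroot⟩ => eq_of_pos_roots ha hc hy hx hyroot hroot⟩

lemma lt_of_neg_of_root (ha : 0 < a) (hc : 0 < c) {E t : ℝ} (hE : 0 < E)
    (hroot : a * E ^ 2 - b * E - c = 0) (ht : 0 < t) (hneg : a * t ^ 2 - b * t - c < 0) :
    t < E := by
  have hfactor : (t - E) * (a * (t + E) - b) < 0 := by linear_combination hneg - hroot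
  have hpos : 0 < a * (t + E) - b := by
    nlinarith [mul_sub_pos_of_root hc hE hroot]
  linarith [neg_of_mul_neg_left hfactor hpos.le]

end PosRootQuadratic

lemma div_eq_iff_quadratic {ω ω' δ u x : ℝ} (hx : x ≠ 0) (hden : ω * x + ω' * x⁻¹ + u ≠ 0) :
    (ω * x - ω' * x⁻¹) / (ω * x + ω' * x⁻¹ + u) = δ ↔
      ω * (1 - δ) * x ^ 2 - u * δ * x - ω' * (1 + δ) = 0 := by
  rw [div_eq_iff hden]
  constructor
  · intro h
    field_simp at h
    linear_combination h
  · intro h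
    field_simp
    linear_combination h

open PosRootQuadratic in
theorem stmt_17_general (ω ω' δ u : ℝ)
    (hω : 0 < ω) (hω' : 0 < ω')
    (hδ : -1 < δ) (hδ1 : δ < 1) (hu : u = 1 - ω - ω')
    (hlt : ω - ω' < δ) (hu0 : 0 ≤ u) :
    ∃ E : ℝ, 0 < E ∧
      ω * (1 - δ) * E ^ 2 - u * δ * E - ω' * (1 + δ) = 0 ∧
      (∀ x : ℝ, 0 < x → ω * (1 - δ) * x ^ 2 - u * δ * x - ω' * (1 + δ) = 0 → x = E) ∧
      (ω * E - ω' * E⁻¹) / (ω * E + ω' * E⁻¹ + u) = δ ∧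
      (∀ x : ℝ, 0 < x → (ω * x - ω' * x⁻¹) / (ω * x + ω' * x⁻¹ + u) = δ → x = E) ∧
      1 < E := by
  have ha : 0 < ω * (1 - δ) := mul_pos hω (by linarith)
  have hc : 0 < ω' * (1 + δ) := mul_pos hω' (by linarith)
  have hrat : ∀ x : ℝ, 0 < x → ((ω * x - ω' * x⁻¹) / (ω * x + ω' * x⁻¹ + u) = δ ↔
      ω * (1 - δ) * x ^ 2 - u * δ * x - ω' * (1 + δ) = 0) :=
    fun x hx => div_eq_iff_quadratic hx.ne' (by positivity)
  obtain ⟨E, ⟨hE, hroot⟩, huniq⟩ := existsUnique_pos_root (b := u * δ) ha hc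
  have hq1 : ω * (1 - δ) * 1 ^ 2 - u * δ * 1 - ω' * (1 + δ) < 0 := by
    subst hu
    linear_combination hlt
  refine ⟨E, hE, hroot, fun x hx h => huniq x ⟨hx, h⟩, (hrat E hE).2 hroot,
    fun x hx h => huniq x ⟨hx, (hrat x hx).1 h⟩, lt_of_neg_of_root ha hc hE hroot one_pos hq1⟩

/-- Let `0 < ω < 1`, `0 < ω' < 1`, `−1 < δ < 1`, `u = 1 − ω − ω'`,
and assume `ω − ω' < δ` and `u ≥ 0`. Then the quadratic
`ω(1−δ)x² − uδx − ω'(1+δ)` has exactly one strictly positive root `E`; this `E` is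
the unique strictly positive solution of `(ωx − ω'x⁻¹)/(ωx + ω'x⁻¹ + u) = δ`,
and `E > 1`. -/
theorem stmt_17 (ω ω' δ u : ℝ)
    (hω : 0 < ω) (hω1 : ω < 1) (hω' : 0 < ω') (hω'1 : ω' < 1)
    (hδ : -1 < δ) (hδ1 : δ < 1) (hu : u = 1 - ω - ω')
    (hlt : ω - ω' < δ) (hu0 : 0 ≤ u) :
    ∃ E : ℝ, 0 < E ∧
      ω * (1 - δ) * E ^ 2 - u * δ * E - ω' * (1 + δ) = 0 ∧
      (∀ x : ℝ, 0 < x → ω * (1 - δ) * x ^ 2 - u * δ * x - ω' * (1 + δ) = 0 → x = E) ∧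
      (ω * E - ω' * E⁻¹) / (ω * E + ω' * E⁻¹ + u) = δ ∧
      (∀ x : ℝ, 0 < x → (ω * x - ω' * x⁻¹) / (ω * x + ω' * x⁻¹ + u) = δ → x = E) ∧
      1 < E :=
  stmt_17_general ω ω' δ u hω hω' hδ hδ1 hu hlt hu0
end

section
/- Let i ≠ j be indices in {1,…,n}, let −1 < δ < 1, and let C := {x ∈ Δ_n : x_i − x_j ≥ δ}. Let z ∈ ℝ^n_{++}, set ‖z‖₁ = Σ_{k=1}^n z_k, z♯ := z/‖z‖₁, s := (z_i − z_j)/‖z‖₁, and u := ‖z‖₁ − z_i − z_j (so u ≥ 0). Then: (1) if s ≥ δ, then z♯ ∈ C and z♯ is the unique minimizer over C of x ↦ D_KL(x‖z♯); (2) if s < δ, then the equation (z_i·x − z_j·x⁻¹)/(z_i·x + z_j·x⁻¹ + u) = δ has a unique strictly positive solution E, with E > 1, and, setting D := z_i·E + z_j·E⁻¹ + u, the vector ẑ with components ẑ_i = (E/D)·z_i, ẑ_j = (E⁻¹/D)·z_j, and ẑ_k = z_k/D for k ∉ {i,j}, belongs to C ∩ ℝ^n_{++} and is the unique minimizer over C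 of x ↦ D_KL(x‖z♯). -/
/-- The Kullback–Leibler divergence `D_KL(p‖q) = ∑_k p_k log(p_k/q_k)`. -/
noncomputable def KL (n : ℕ) (p q : Fin n → ℝ) : ℝ :=
  ∑ k, p k * Real.log (p k / q k)

lemma gibbs_point (p q : ℝ) (hp : 0 ≤ p) (hq : 0 < q) : p - q ≤ p * Real.log (p / q) := by
  rcases eq_or_lt_of_le hp with h | h
  · simp [← h]; linarith
  · have hx : 0 < q / p := by positivity
    have h1 := Real.log_le_sub_one_of_pos hx
    have hlog : Real.log (p / q) = - Real.log (q / p) := by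
      rw [← Real.log_inv, inv_div]
    have h2 : p * (q / p - 1) = q - p := by field_simp
    nlinarith [mul_le_mul_of_nonneg_left h1 h.le]

lemma gibbs_point_eq (p q : ℝ) (hp : 0 ≤ p) (hq : 0 < q)
    (heq : p * Real.log (p / q) = p - q) : p = q := by
  rcases eq_or_lt_of_le hp with h | h
  · rw [← h] at heq; simp at heq; linarith
  · by_contra hne
    have hx : 0 < q / p := by positivity
    have hne1 : q / p ≠ 1 := by
      intro h1; apply hne; field_simp at h1; linarith
    have h1 := Real.log_lt_sub_one_of_pos hx hne1
    have hlog : Real.log (p / q) = - Real.log (q / p) := by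
      rw [← Real.log_inv, inv_div]
    have h2 : p * (q / p - 1) = q - p := by field_simp
    nlinarith [mul_lt_mul_of_pos_left h1 h]

lemma KL_self (n : ℕ) (p : Fin n → ℝ) : KL n p p = 0 := by
  unfold KL
  apply Finset.sum_eq_zero
  intro k _
  rcases eq_or_ne (p k) 0 with h | h
  · simp [h]
  · simp [div_self h]

lemma gibbs_sum (n : ℕ) (p q : Fin n → ℝ) (hp : ∀ k, 0 ≤ p k) (hq : ∀ k, 0 < q k)
    (hps : ∑ k, p k = 1) (hqs : ∑ k, q k = 1) : 0 ≤ KL n p q := by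
  unfold KL
  have : ∑ k, (p k - q k) ≤ ∑ k, p k * Real.log (p k / q k) :=
    Finset.sum_le_sum fun k _ => gibbs_point _ _ (hp k) (hq k)
  rw [Finset.sum_sub_distrib, hps, hqs] at this
  linarith

lemma gibbs_eq (n : ℕ) (p q : Fin n → ℝ) (hp : ∀ k, 0 ≤ p k) (hq : ∀ k, 0 < q k)
    (hps : ∑ k, p k = 1) (hqs : ∑ k, q k = 1) (hKL : KL n p q = 0) : p = q := by
  have hsum : ∑ k, (p k - q k) = ∑ k, p k * Real.log (p k / q k) := by
    unfold KL at hKL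
    rw [Finset.sum_sub_distrib, hps, hqs, hKL]; ring
  have := (Finset.sum_eq_sum_iff_of_le
    (fun k _ => gibbs_point (p k) (q k) (hp k) (hq k))).mp hsum
  funext k
  exact gibbs_point_eq _ _ (hp k) (hq k) (this k (Finset.mem_univ k)).symm

lemma KL_decomp (n : ℕ) (w p q : Fin n → ℝ) (hw : ∀ k, 0 ≤ w k)
    (hp : ∀ k, 0 < p k) (hq : ∀ k, 0 < q k) :
    KL n w q = KL n w p + ∑ k, w k * Real.log (p k / q k) := by
  unfold KL
  rw [← Finset.sum_add_distrib]
  apply Finset.sum_congr rfl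
  intro k _
  rcases eq_or_lt_of_le (hw k) with h | h
  · simp [← h]
  · have h1 := (hp k).ne'
    have h2 := (hq k).ne'
    rw [← mul_add, ← Real.log_mul (div_pos h (hp k)).ne' (div_pos (hp k) (hq k)).ne']
    rw [div_mul_div_comm, mul_comm (p k) (q k), mul_div_mul_right _ _ h1]

lemma quad_root (a b c : ℝ) (ha : 0 < a) (hc : 0 < c) :
    ∃ E : ℝ, 0 < E ∧ a*E^2 - b*E - c = 0 ∧
      ∀ x : ℝ, 0 < x → a*x^2 - b*x - c = 0 → x = E := by
  have hd : (0:ℝ) ≤ b^2 + 4*a*c := by nlinarith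
  set r := Real.sqrt (b^2 + 4*a*c) with hrdef
  have hr2 : r^2 = b^2 + 4*a*c := Real.sq_sqrt hd
  have habs : |b| < r := by
    rw [hrdef, ← Real.sqrt_sq_eq_abs]
    exact Real.sqrt_lt_sqrt (sq_nonneg b) (by nlinarith)
  have hbr : 0 < b + r := by
    have := neg_abs_le b
    linarith
  refine ⟨(b + r)/(2*a), by positivity, ?_, ?_⟩
  · field_simp
    nlinarith [hr2]
  · intro x hx hq
    set E := (b + r)/(2*a) with hEdef
    have hE0 : 0 < E := by positivity
    have hqE : a*E^2 - b*E - c = 0 := by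
      rw [hEdef]; field_simp; nlinarith [hr2]
    have hfac : (x - E) * (a*(x + E) - b) = 0 := by linear_combination hq - hqE
    rcases mul_eq_zero.mp hfac with h | h
    · linarith [sub_eq_zero.mp h]
    · exfalso
      have hb : a * E < b := by nlinarith [mul_pos ha hx]
      nlinarith [mul_pos ha hE0, mul_pos (mul_pos ha hE0) hE0]

lemma quad_gt_one (a b c E : ℝ) (ha : 0 < a) (hc : 0 < c) (hE : 0 < E)
    (hqE : a*E^2 - b*E - c = 0) (h1 : a - b - c < 0) : 1 < E := by
  by_contra h
  push_neg at h
  have hEb : b * E < a * E^2 := by nlinarith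
  have hab : b < a * E := by
    rcases le_or_gt (a*E) b with h2 | h2
    · nlinarith [mul_le_mul_of_nonneg_right h2 hE.le]
    · exact h2
  nlinarith [mul_nonneg (sub_nonneg.mpr h) (by nlinarith : (0:ℝ) ≤ a*(1+E) - b)]
/-- **projection onto a gap constraint.**
Let `i ≠ j`, `−1 < δ < 1`, `C = {x ∈ Δ_n : x_i − x_j ≥ δ}`, `z ∈ ℝ^n_{++}`,
`z♯ = z/‖z‖₁`, `s = (z_i − z_j)/‖z‖₁` and `u = ‖z‖₁ − z_i − z_j` (so `u ≥ 0`). Then: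
(1) if `s ≥ δ`, `z♯ ∈ C` and is the unique minimizer over `C` of `D_KL(·‖z♯)`;
(2) if `s < δ`, the equation `(z_i x − z_j x⁻¹)/(z_i x + z_j x⁻¹ + u) = δ` has a
unique strictly positive solution `E`, with `E > 1`, and with
`D := z_i E + z_j E⁻¹ + u`, the vector `ẑ` given by `ẑ_i = (E/D) z_i`,
`ẑ_j = (E⁻¹/D) z_j`, `ẑ_k = z_k/D` otherwise, belongs to `C ∩ ℝ^n_{++}` and is
the unique minimizer over `C` of `D_KL(·‖z♯)`. -/
theorem stmt_18 (n : ℕ) (i j : Fin n) (hij : i ≠ j)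
    (δ : ℝ) (hδ : -1 < δ) (hδ1 : δ < 1)
    (C : Set (Fin n → ℝ))
    (hC : C = {x | (∀ k, 0 ≤ x k) ∧ (∑ k, x k = 1) ∧ δ ≤ x i - x j})
    (z : Fin n → ℝ) (hz : ∀ k, 0 < z k)
    (zsharp : Fin n → ℝ) (hzsharp : ∀ k, zsharp k = z k / ∑ l, z l)
    (s u : ℝ) (hs : s = (z i - z j) / ∑ l, z l) (hu : u = (∑ l, z l) - z i - z j) :
    (δ ≤ s →
      zsharp ∈ C ∧
      (∀ w ∈ C, KL n zsharp zsharp ≤ KL n w zsharp) ∧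
      (∀ w ∈ C, (∀ x ∈ C, KL n w zsharp ≤ KL n x zsharp) → w = zsharp)) ∧
    (s < δ →
      ∃ E : ℝ, 0 < E ∧ 1 < E ∧
        (z i * E - z j * E⁻¹) / (z i * E + z j * E⁻¹ + u) = δ ∧
        (∀ x : ℝ, 0 < x →
          (z i * x - z j * x⁻¹) / (z i * x + z j * x⁻¹ + u) = δ → x = E) ∧
        ∀ zhat : Fin n → ℝ,
          (∀ k, zhat k = if k = i then E / (z i * E + z j * E⁻¹ + u) * z i
              else if k = j then E⁻¹ / (z i * E + z j * E⁻¹ + u) * z j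
              else z k / (z i * E + z j * E⁻¹ + u)) →
          zhat ∈ C ∧ (∀ k, 0 < zhat k) ∧
          (∀ w ∈ C, KL n zhat zsharp ≤ KL n w zsharp) ∧
          (∀ w ∈ C, (∀ x ∈ C, KL n w zsharp ≤ KL n x zsharp) → w = zhat)) := by
  have hS : 0 < ∑ l, z l := Finset.sum_pos (fun k _ => hz k) ⟨i, Finset.mem_univ i⟩
  set S := ∑ l, z l with hSdef
  have hzs_pos : ∀ k, 0 < zsharp k := fun k => by
    rw [hzsharp k]; exact div_pos (hz k) hS
  have hzs_sum : ∑ k, zsharp k = 1 := by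
    simp_rw [hzsharp]
    rw [← Finset.sum_div, div_self hS.ne']
  have hijS : z i + z j ≤ S := by
    have h := Finset.sum_le_sum_of_subset_of_nonneg (Finset.subset_univ ({i, j} : Finset (Fin n)))
      (fun k _ _ => (hz k).le)
    rwa [Finset.sum_pair hij] at h
  have hu0 : 0 ≤ u := by rw [hu]; linarith
  have hziz : z i - z j = s * S := by rw [hs]; field_simp
  constructor
  · -- Part 1
    intro hδs
    have hgap : δ ≤ zsharp i - zsharp j := by
      rw [hzsharp i, hzsharp j]
      have h1 : z i / S - z j / S = s := by rw [hs]; ring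
      linarith
    have hmem : zsharp ∈ C := by
      rw [hC]; exact ⟨fun k => (hzs_pos k).le, hzs_sum, hgap⟩
    refine ⟨hmem, ?_, ?_⟩
    · intro w hw
      rw [hC] at hw
      rw [KL_self]
      exact gibbs_sum n w zsharp hw.1 hzs_pos hw.2.1 hzs_sum
    · intro w hw hmin
      have h1 := hmin zsharp hmem
      rw [KL_self] at h1
      rw [hC] at hw
      have h2 := gibbs_sum n w zsharp hw.1 hzs_pos hw.2.1 hzs_sum
      exact gibbs_eq n w zsharp hw.1 hzs_pos hw.2.1 hzs_sum (le_antisymm h1 h2)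
  · -- Part 2
    intro hsδ
    have ha : 0 < (1-δ) * z i := by nlinarith [hz i]
    have hc : 0 < (1+δ) * z j := by nlinarith [hz j]
    obtain ⟨E, hE0, hqE, huniq⟩ := quad_root ((1-δ)*z i) (δ*u) ((1+δ)*z j) ha hc
    have h1lt : (1-δ)*z i - δ*u - (1+δ)*z j < 0 := by
      have h2 : s * S < δ * S := by
        exact mul_lt_mul_of_pos_right hsδ hS
      rw [hu]; nlinarith
    have hE1 : 1 < E := quad_gt_one _ _ _ E ha hc hE0 hqE h1lt
    have hiff : ∀ x : ℝ, 0 < x →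
        ((z i * x - z j * x⁻¹) / (z i * x + z j * x⁻¹ + u) = δ ↔
         (1-δ)*z i*x^2 - (δ*u)*x - (1+δ)*z j = 0) := by
      intro x hx
      have ht : x * x⁻¹ = 1 := mul_inv_cancel₀ hx.ne'
      have hden : 0 < z i * x + z j * x⁻¹ + u := by
        have h1 : 0 < z i * x + z j * x⁻¹ :=
          add_pos (mul_pos (hz i) hx) (mul_pos (hz j) (inv_pos.mpr hx))
        linarith
      rw [div_eq_iff hden.ne']
      constructor
      · intro h
        linear_combination x * h + (1+δ) * z j * ht
      · intro h
        linear_combination x⁻¹ * h + (δ*u - (1-δ)*z i*x) * ht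
    have hEsol : (z i * E - z j * E⁻¹) / (z i * E + z j * E⁻¹ + u) = δ :=
      (hiff E hE0).mpr hqE
    refine ⟨E, hE0, hE1, hEsol, fun x hx hxe => huniq x hx ((hiff x hx).mp hxe), ?_⟩
    intro zhat hzh0
    obtain ⟨D, hDdef⟩ : ∃ D : ℝ, D = z i * E + z j * E⁻¹ + u := ⟨_, rfl⟩
    have hD : 0 < D := by
      have h1 : 0 < z i * E + z j * E⁻¹ :=
        add_pos (mul_pos (hz i) hE0) (mul_pos (hz j) (inv_pos.mpr hE0))
      rw [hDdef]; linarith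
    have hzh : ∀ k, zhat k = if k = i then E / D * z i
        else if k = j then E⁻¹ / D * z j else z k / D := by
      intro k; rw [hzh0 k, ← hDdef]
    have hEsol' : (z i * E - z j * E⁻¹) / D = δ := by rw [hDdef]; exact hEsol
    have hzhi : zhat i = E / D * z i := by rw [hzh i]; simp
    have hzhj : zhat j = E⁻¹ / D * z j := by
      rw [hzh j]; simp [hij, Ne.symm hij]
    have hzhpos : ∀ k, 0 < zhat k := by
      intro k
      rw [hzh k]
      split_ifs
      · exact mul_pos (div_pos hE0 hD) (hz i)
      · exact mul_pos (div_pos (inv_pos.mpr hE0) hD) (hz j)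
      · exact div_pos (hz k) hD
    have hrepr : ∀ k, zhat k = z k / D +
        ((if k = i then (E-1)*z i/D else 0) + (if k = j then (E⁻¹-1)*z j/D else 0)) := by
      intro k
      rw [hzh k]
      by_cases hki : k = i
      · subst hki
        simp [hij]
        field_simp
        ring
      · by_cases hkj : k = j
        · subst hkj
          simp [hki]
          field_simp
          ring
        · simp [hki, hkj]
    have hzh_sum : ∑ k, zhat k = 1 := by
      rw [Finset.sum_congr rfl fun k _ => hrepr k]
      rw [Finset.sum_add_distrib, Finset.sum_add_distrib, ← Finset.sum_div]
      rw [Finset.sum_ite_eq' Finset.univ i (fun _ => (E-1)*z i/D),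
          Finset.sum_ite_eq' Finset.univ j (fun _ => (E⁻¹-1)*z j/D)]
      simp only [Finset.mem_univ, if_true]
      rw [← hSdef]
      have hDS : S + ((E-1)*z i + (E⁻¹-1)*z j) = D := by rw [hDdef, hu]; ring
      have hre : S/D + ((E-1)*z i/D + (E⁻¹-1)*z j/D) = (S + ((E-1)*z i + (E⁻¹-1)*z j))/D := by
        ring
      rw [hre, hDS, div_self hD.ne']
    have hgap : zhat i - zhat j = δ := by
      rw [hzhi, hzhj, ← hEsol']
      ring
    have hmemhat : zhat ∈ C := by
      rw [hC]; exact ⟨fun k => (hzhpos k).le, hzh_sum, le_of_eq hgap.symm⟩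
    have hlogratio : ∀ k, Real.log (zhat k / zsharp k) = Real.log (S/D) +
        ((if k = i then Real.log E else 0) + (if k = j then -Real.log E else 0)) := by
      intro k
      rw [hzsharp k]
      by_cases hki : k = i
      · subst hki
        have h1 : zhat k / (z k / S) = E * (S/D) := by
          rw [hzhi]; field_simp [(hz k).ne', hS.ne', hD.ne']
        rw [h1, Real.log_mul hE0.ne' (div_pos hS hD).ne']
        simp [hij]
        ring
      · by_cases hkj : k = j
        · subst hkj
          have h1 : zhat k / (z k / S) = E⁻¹ * (S/D) := by
            rw [hzhj]; field_simp [(hz k).ne', hS.ne', hD.ne', hE0.ne']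
          rw [h1, Real.log_mul (inv_pos.mpr hE0).ne' (div_pos hS hD).ne', Real.log_inv]
          simp [hki]
          ring
        · have h1 : zhat k / (z k / S) = S/D := by
            rw [hzh k, if_neg hki, if_neg hkj]; field_simp [(hz k).ne', hS.ne', hD.ne']
          rw [h1]
          simp [hki, hkj]
    have hT : ∀ w : Fin n → ℝ, (∑ k, w k = 1) →
        ∑ k, w k * Real.log (zhat k / zsharp k) =
          Real.log (S/D) + Real.log E * (w i - w j) := by
      intro w hws
      rw [Finset.sum_congr rfl fun k _ => by rw [hlogratio k]]
      have h2 : ∀ k, w k * (Real.log (S/D) +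
          ((if k = i then Real.log E else 0) + (if k = j then -Real.log E else 0))) =
          w k * Real.log (S/D) + ((if k = i then w k * Real.log E else 0) +
            (if k = j then -(w k * Real.log E) else 0)) := by
        intro k; split_ifs <;> ring
      rw [Finset.sum_congr rfl fun k _ => h2 k]
      rw [Finset.sum_add_distrib, Finset.sum_add_distrib, ← Finset.sum_mul, hws]
      rw [Finset.sum_ite_eq' Finset.univ i (fun k => w k * Real.log E),
          Finset.sum_ite_eq' Finset.univ j (fun k => -(w k * Real.log E))]
      simp only [Finset.mem_univ, if_true]
      ring
    have hKLdiff : ∀ w : Fin n → ℝ, w ∈ C →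
        KL n w zsharp = KL n w zhat + (KL n zhat zsharp + Real.log E * (w i - w j - δ)) := by
      intro w hw
      rw [hC] at hw
      rw [KL_decomp n w zhat zsharp hw.1 hzhpos hzs_pos,
          KL_decomp n zhat zhat zsharp (fun k => (hzhpos k).le) hzhpos hzs_pos,
          KL_self, hT w hw.2.1, hT zhat hzh_sum, hgap]
      ring
    have hlogE : 0 < Real.log E := Real.log_pos hE1
    refine ⟨hmemhat, hzhpos, ?_, ?_⟩
    · intro w hw
      rw [hKLdiff w hw]
      have hw' := hw; rw [hC] at hw'
      have h1 : 0 ≤ KL n w zhat := gibbs_sum n w zhat hw'.1 hzhpos hw'.2.1 hzh_sum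
      have h2 : 0 ≤ Real.log E * (w i - w j - δ) :=
        mul_nonneg hlogE.le (by linarith [hw'.2.2])
      linarith
    · intro w hw hmin
      have h1 := hmin zhat hmemhat
      rw [hKLdiff w hw] at h1
      have hw' := hw; rw [hC] at hw'
      have h2 : 0 ≤ KL n w zhat := gibbs_sum n w zhat hw'.1 hzhpos hw'.2.1 hzh_sum
      have h3 : 0 ≤ Real.log E * (w i - w j - δ) :=
        mul_nonneg hlogE.le (by linarith [hw'.2.2])
      exact gibbs_eq n w zhat hw'.1 hzhpos hw'.2.1 hzh_sum (le_antisymm (by linarith) h2)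
end
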